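/- For all filters f and g and a variable $x that does not occur in g, the filter (f and g) is equivalent to the filter (f as $x | ($x and g)), where in the binding semantics the context may also bind $x to the error ⊥. -/

import Mathlib

/-!
Formalization of the jq-style filter language and its denotational semantics.

* Values `Val` are booleans, integers or arrays.
* A value result `VRes` is a value or the error `⊥` (encoded as `none`).
* A context `Ctx` maps variables (strings) to value results
  (contexts may also bind a variable to the error `⊥`).
* Streams are finite lists of value results; `Σ_{x∈s} h x` is `s.flatMap h`.
-/

namespace Jq

/-- JSON-like values: `v ::= true | false | n | [v,…,v]`. -/
inductive Val : Type where
  | bool : Bool → Val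
  | int  : Int → Val
  | arr  : List Val → Val

mutual
def Val.decEq : (a b : Val) → Decidable (a = b)
  | .bool a, .bool b =>
      if h : a = b then .isTrue (by rw [h]) else .isFalse (by simp [h])
  | .int a, .int b =>
      if h : a = b then .isTrue (by rw [h]) else .isFalse (by simp [h])
  | .arr a, .arr b =>
      match Val.decEqList a b with
      | .isTrue h => .isTrue (by rw [h])
      | .isFalse h => .isFalse (by simp [h])
  | .bool _, .int _ => .isFalse (fun h => Val.noConfusion h)
  | .bool _, .arr _ => .isFalse (fun h => Val.noConfusion h)
  | .int _, .bool _ => .isFalse (fun h => Val.noConfusion h)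
  | .int _, .arr _ => .isFalse (fun h => Val.noConfusion h)
  | .arr _, .bool _ => .isFalse (fun h => Val.noConfusion h)
  | .arr _, .int _ => .isFalse (fun h => Val.noConfusion h)

def Val.decEqList : (a b : List Val) → Decidable (a = b)
  | [], [] => .isTrue rfl
  | [], _ :: _ => .isFalse (fun h => nomatch h)
  | _ :: _, [] => .isFalse (List.cons_ne_nil _ _)
  | a :: as, b :: bs =>
      match Val.decEq a b, Val.decEqList as bs with
      | .isTrue h1, .isTrue h2 => .isTrue (by rw [h1, h2])
      | .isFalse h1, _ => .isFalse (by simp [h1])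
      | .isTrue _, .isFalse h2 => .isFalse (by simp [h2])
end

instance : DecidableEq Val := Val.decEq

/-- A value result: a value or the error `⊥` (= `none`). -/
abbrev VRes := Option Val

/-- A context maps variables to value results. -/
abbrev Ctx := String → VRes

/-- `c{$x ↦ r}` -/
def Ctx.update (c : Ctx) (x : String) (r : VRes) : Ctx :=
  fun y => if y = x then r else c y

/-- `[s]`: the array of the elements of the stream `s` if none of them is `⊥`,
and (the leftmost) `⊥` otherwise. -/
def collectArr (s : List VRes) : VRes :=
  if s.all Option.isSome then some (.arr (s.filterMap id)) else none

/-- `ite(x, i, t, e) = ⟨⊥⟩` if `x = ⊥`, `t` if `x = i`, `e` otherwise. -/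
def iteV (x : VRes) (i : Val) (t e : List VRes) : List VRes :=
  match x with
  | none => [none]
  | some x => if x = i then t else e

/-- `v[i] = v_i` if `v = [v_0,…,v_n]` and `0 ≤ i ≤ n`, and `⊥` otherwise. -/
def vidx (v : Val) (i : VRes) : VRes :=
  match v, i with
  | .arr vs, some (.int n) =>
      if h : 0 ≤ n ∧ n.toNat < vs.length then some (vs[n.toNat]'h.2) else none
  | _, _ => none

/-- jq-style filters.  A Cartesian operator `∘` is any function from pairs of
values to value results (e.g. `+`, `=`); `cst w` is the constant filter `⌜w⌝`. -/
inductive Filter : Type where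
  /-- integer literal `n` -/
  | lit : Int → Filter
  /-- constant filter `⌜w⌝` -/
  | cst : Val → Filter
  /-- variable `$x` -/
  | var : String → Filter
  /-- identity `.` -/
  | id : Filter
  /-- `.[]` -/
  | iter : Filter
  /-- `.[f]` -/
  | idx : Filter → Filter
  /-- `[f]` -/
  | arr : Filter → Filter
  /-- `f?` -/
  | opt : Filter → Filter
  /-- `f, g` -/
  | comma : Filter → Filter → Filter
  /-- `f | g` -/
  | pipe : Filter → Filter → Filter
  /-- `f ∘ g` for a Cartesian operator `∘` -/
  | cart : (Val → Val → VRes) → Filter → Filter → Filter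
  /-- `f and g` -/
  | and : Filter → Filter → Filter
  /-- `f or g` -/
  | or : Filter → Filter → Filter
  /-- `if f then g else h` -/
  | ite : Filter → Filter → Filter → Filter
  /-- `f as $x | g` -/
  | bind : Filter → String → Filter → Filter
  /-- `reduce xs as $x (init; f)` -/
  | reduce : Filter → String → Filter → Filter → Filter
  /-- `foreach xs as $x (init; f)` -/
  | foreach : Filter → String → Filter → Filter → Filter
  /-- `empty` -/
  | empty : Filter

/-- `φ^c_v(xs, f)` for `φ ∈ {reduce, foreach}`, abstracted over the step
function `step x v = f|^{c{$x↦x}}_v`: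
`φ^c_v(⟨x⟩+xt, f) = (⟨⟩ if reduce, ⟨v⟩ if foreach) + Σ_{y∈step x v} φ^c_y(xt, f)`
and `φ^c_v(⟨⟩, f) = ⟨v⟩`. -/
def foldPhi (isReduce : Bool) (step : VRes → VRes → List VRes) :
    List VRes → VRes → List VRes
  | [], v => [v]
  | x :: xt, v =>
      (if isReduce then [] else [v]) ++
        (step x v).flatMap (fun y => foldPhi isReduce step xt y)

/-- The evaluation `f|^c_v` of a filter `f` in context `c` on a value `v`,
returning a stream of value results. -/
def eval : Filter → Ctx → Val → List VRes
  | .empty, _, _ => []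
  | .id, _, v => [some v]
  | .lit n, _, _ => [some (.int n)]
  | .cst w, _, _ => [some w]
  | .var x, c, _ => [c x]
  | .arr f, c, v => [collectArr (eval f c v)]
  | .comma f g, c, v => eval f c v ++ eval g c v
  | .pipe f g, c, v =>
      (eval f c v).flatMap (fun r => match r with
        | none => [none]
        | some w => eval g c w)
  | .bind f x g, c, v =>
      (eval f c v).flatMap (fun r => eval g (c.update x r) v)
  | .cart op f g, c, v =>
      (eval f c v).flatMap (fun x =>
        (eval g c v).flatMap (fun y =>
          match x, y with
          | some x, some y => [op x y]
          | _, _ => [none]))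
  | .opt f, c, v =>
      (eval f c v).flatMap (fun r => match r with
        | none => []
        | some w => [some w])
  | .and f g, c, v =>
      (eval f c v).flatMap (fun r => iteV r (.bool false) [some (.bool false)] (eval g c v))
  | .or f g, c, v =>
      (eval f c v).flatMap (fun r => iteV r (.bool true) [some (.bool true)] (eval g c v))
  | .ite f g h, c, v =>
      (eval f c v).flatMap (fun r => iteV r (.bool true) (eval g c v) (eval h c v))
  | .iter, _, v =>
      match v with
      | .arr vs => vs.map some
      | _ => [none]
  | .idx f, c, v => (eval f c v).flatMap (fun i => [vidx v i])
  | .reduce xs x init f, c, v =>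
      (eval init c v).flatMap (fun i =>
        foldPhi true (fun r st => match st with
          | none => [none]
          | some w => eval f (c.update x r) w) (eval xs c v) i)
  | .foreach xs x init f, c, v =>
      (eval init c v).flatMap (fun i =>
        foldPhi false (fun r st => match st with
          | none => [none]
          | some w => eval f (c.update x r) w) (eval xs c v) i)

/-- The evaluation of a filter on a value result: `f|^c_⊥ = ⟨⊥⟩`. -/
def evalR (f : Filter) (c : Ctx) (r : VRes) : List VRes :=
  match r with
  | none => [none]
  | some v => eval f c v

/-- Two filters are equivalent iff `f|^c_v = g|^c_v` for all contexts `c` and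
value results `v`. -/
def Filter.Equiv (f g : Filter) : Prop :=
  ∀ (c : Ctx) (r : VRes), evalR f c r = evalR g c r

/-- The variable `$x` occurs in the filter `f` (including binding occurrences). -/
def occurs (x : String) : Filter → Prop
  | .lit _ => False
  | .cst _ => False
  | .id => False
  | .iter => False
  | .empty => False
  | .var y => y = x
  | .idx f => occurs x f
  | .arr f => occurs x f
  | .opt f => occurs x f
  | .comma f g => occurs x f ∨ occurs x g
  | .pipe f g => occurs x f ∨ occurs x g
  | .cart _ f g => occurs x f ∨ occurs x g
  | .and f g => occurs x f ∨ occurs x g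
  | .or f g => occurs x f ∨ occurs x g
  | .ite f g h => occurs x f ∨ occurs x g ∨ occurs x h
  | .bind f y g => occurs x f ∨ y = x ∨ occurs x g
  | .reduce xs y i f => occurs x xs ∨ y = x ∨ occurs x i ∨ occurs x f
  | .foreach xs y i f => occurs x xs ∨ y = x ∨ occurs x i ∨ occurs x f

theorem Ctx.update_apply_self (c : Ctx) (x : String) (r : VRes) : c.update x r x = r :=
  if_pos rfl

theorem Ctx.update_apply_of_ne (c : Ctx) {x y : String} (h : y ≠ x) (r : VRes) :
    c.update x r y = c y :=
  if_neg h

theorem Ctx.update_apply_eq_update_apply {c c' : Ctx} (x : String) (r : VRes) {y : String}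
    (h : y ≠ x → c y = c' y) : c.update x r y = c'.update x r y := by
  by_cases hy : y = x
  · subst hy; simp only [Ctx.update_apply_self]
  · simp only [Ctx.update_apply_of_ne _ hy, h hy]

theorem eval_congr_ctx (g : Filter) {c c' : Ctx} (h : ∀ y, occurs y g → c y = c' y) (v : Val) :
    eval g c v = eval g c' v := by
  induction g generalizing c c' v with
  | lit | cst | id | iter | empty => rfl
  | var y => simp only [eval, h y rfl]
  | idx f ihf | arr f ihf | opt f ihf => simp only [eval, ihf h]
  | comma f g ihf ihg | pipe f g ihf ihg | cart _ f g ihf ihg | and f g ihf ihg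
  | or f g ihf ihg =>
      simp only [eval, ihf fun y hy => h y (.inl hy), ihg fun y hy => h y (.inr hy)]
  | ite f g k ihf ihg ihk =>
      simp only [eval, ihf fun y hy => h y (.inl hy), ihg fun y hy => h y (.inr (.inl hy)),
        ihk fun y hy => h y (.inr (.inr hy))]
  | bind f x g ihf ihg =>
      simp only [eval, ihf fun y hy => h y (.inl hy),
        ihg fun y hy => Ctx.update_apply_eq_update_apply x _ fun _ => h y (.inr (.inr hy))]
  | reduce xs x i f ihxs ihi ihf | foreach xs x i f ihxs ihi ihf =>
      simp only [eval, ihxs fun y hy => h y (.inl hy), ihi fun y hy => h y (.inr (.inr (.inl hy))),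
        ihf fun y hy => Ctx.update_apply_eq_update_apply x _ fun _ => h y (.inr (.inr (.inr hy)))]

theorem eval_update_of_not_occurs {x : String} {g : Filter} (hg : ¬ occurs x g) (c : Ctx)
    (r : VRes) (v : Val) : eval g (c.update x r) v = eval g c v :=
  eval_congr_ctx g (fun y hy => Ctx.update_apply_of_ne c (y := y) (by rintro rfl; exact hg hy) r) v

/-- For all filters `f` and `g` and a variable `$x` that does not occur in `g`,
the filter `(f and g)` is equivalent to the filter `(f as $x | ($x and g))`.
(In the binding semantics formalized here, a context `Ctx` maps variables to
value results, so it may also bind `$x` to the error `⊥ = none`.) -/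
theorem statement6 (f g : Filter) (x : String) (hg : ¬ occurs x g) :
    (Filter.and f g).Equiv (.bind f x (.and (.var x) g)) := by
  rintro c (_ | v)
  · rfl
  · simp only [evalR, eval, Ctx.update_apply_self, eval_update_of_not_occurs hg,
      List.flatMap_singleton]

end Jq
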